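/- arXiv:2409.20240 — 4 statements merged into one kernel-verified Lean document; each statement's English description precedes it below -/
import Mathlib

section
/- Let n ≥ 3 be an integer. For all integers a and b, the matrices M₁(a,b) and M₂(a,b) are conjugate in SO_w(2n,ℂ): there exists g ∈ GL_{2n}(ℂ) with gᵀ w_{2n} g = w_{2n}, det g = 1, and g · M₁(a,b) · g⁻¹ = M₂(a,b). -/
open Matrix

noncomputable section

/-- The `m × m` antidiagonal permutation matrix over `ℂ`:
entry `(j,k)` is `1` if `j + k + 1 = m` (0-based indices, i.e. `j + k = m + 1` 1-based)
and `0` otherwise. -/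
def wMat (m : ℕ) : Matrix (Fin m) (Fin m) ℂ :=
  Matrix.of fun j k => if (j : ℕ) + (k : ℕ) + 1 = m then 1 else 0

/-- Diagonal entries of the matrix `M₁(a,b)` (0-based indexing of positions `1,…,2n`):
`i^a` in position `1`, `i^(a+b)` in positions `2,…,n−1`, `i^b` in position `n`,
`(−i)^b` in position `n+1`, `(−i)^(a+b)` in positions `n+2,…,2n−1`, `(−i)^a` in position `2n`. -/
def d1 (n : ℕ) (a b : ℤ) : Fin (2 * n) → ℂ := fun j =>
  if (j : ℕ) = 0 then Complex.I ^ a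
  else if (j : ℕ) ≤ n - 2 then Complex.I ^ (a + b)
  else if (j : ℕ) = n - 1 then Complex.I ^ b
  else if (j : ℕ) = n then (-Complex.I) ^ b
  else if (j : ℕ) ≤ 2 * n - 2 then (-Complex.I) ^ (a + b)
  else (-Complex.I) ^ a

/-- Diagonal entries of `M₂(a,b)`: same as `M₁(a,b)` with the entries in
positions `n` and `n+1` (1-based) interchanged. -/
def d2 (n : ℕ) (a b : ℤ) : Fin (2 * n) → ℂ := fun j =>
  if (j : ℕ) = n - 1 then (-Complex.I) ^ b
  else if (j : ℕ) = n then Complex.I ^ b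
  else d1 n a b j

def M1 (n : ℕ) (a b : ℤ) : Matrix (Fin (2 * n)) (Fin (2 * n)) ℂ :=
  Matrix.diagonal (d1 n a b)

def M2 (n : ℕ) (a b : ℤ) : Matrix (Fin (2 * n)) (Fin (2 * n)) ℂ :=
  Matrix.diagonal (d2 n a b)

/-! Both matrices are diagonal, and a permutation matrix conjugates a diagonal matrix into the
diagonal matrix with permuted entries. It preserves the form `w` when the permutation
commutes with `j ↦ rev j`. The transposition of the middle pair `(n, n+1)` turns `M₁` into `M₂`,
but has determinant `-1`; composing it with a second transposition `(p, rev p)` that fixes the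
diagonal of `M₁` restores determinant `1`. A suitable pair is the middle pair itself if `b` is
even, `(1, 2n)` if `a` is even, and `(2, 2n-1)` if `a + b` is even. -/

open Equiv

namespace Equiv.Perm

variable {ι R : Type*} [DecidableEq ι] [Fintype ι]

lemma permMatrix_mul_permMatrix_inv [NonAssocSemiring R] (σ : Perm ι) :
    σ.permMatrix R * σ⁻¹.permMatrix R = 1 := by
  rw [← permMatrix_mul, inv_mul_cancel, permMatrix_one]

lemma inv_permMatrix [CommRing R] (σ : Perm ι) : (σ.permMatrix R)⁻¹ = σ⁻¹.permMatrix R :=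
  inv_eq_right_inv (permMatrix_mul_permMatrix_inv σ)

lemma permMatrix_mul_diagonal_mul_inv [CommRing R] (σ : Perm ι) (d : ι → R) :
    σ.permMatrix R * diagonal d * (σ.permMatrix R)⁻¹ = diagonal (d ∘ σ) := by
  rw [inv_permMatrix, PEquiv.toMatrix_toPEquiv_mul, PEquiv.mul_toMatrix_toPEquiv,
    submatrix_submatrix]
  exact submatrix_diagonal_equiv d σ

lemma transpose_permMatrix_mul_permMatrix_mul [NonAssocSemiring R] {σ τ : Perm ι}
    (h : Commute σ τ) : (σ.permMatrix R)ᵀ * τ.permMatrix R * σ.permMatrix R = τ.permMatrix R := by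
  rw [transpose_permMatrix, ← permMatrix_mul, ← permMatrix_mul, ← mul_assoc, h.eq,
    mul_inv_cancel_right]

lemma commute_swap_of_apply_eq {α : Type*} [DecidableEq α] {f : Perm α} {x y : α}
    (hx : f x = y) (hy : f y = x) : Commute (swap x y) f := by
  have hx' : f⁻¹ x = y := Perm.inv_eq_iff_eq.mpr hy.symm
  have hy' : f⁻¹ y = x := Perm.inv_eq_iff_eq.mpr hx.symm
  rw [Commute, SemiconjBy, swap_mul_eq_mul_swap, hx', hy', swap_comm]

end Equiv.Perm

lemma Function.comp_swap_of_eq {α β : Type*} [DecidableEq α] {f : α → β} {x y : α}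
    (h : f x = f y) : f ∘ Equiv.swap x y = f := by
  funext z
  simp only [Function.comp_apply, Equiv.swap_apply_def]
  split_ifs <;> simp_all

lemma wMat_eq_permMatrix_revPerm (m : ℕ) : wMat m = Fin.revPerm.permMatrix ℂ := by
  ext j k
  simp only [wMat, of_apply, PEquiv.toMatrix_apply, toPEquiv_apply, Option.mem_def,
    Option.some.injEq, Fin.revPerm_apply, Fin.ext_iff, Fin.val_rev]
  congr 1
  apply propext
  omega

lemma commute_swap_revPerm {m : ℕ} (p : Fin m) : Commute (swap p p.rev) Fin.revPerm :=
  Perm.commute_swap_of_apply_eq rfl (Fin.rev_rev p)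

lemma Fin.rev_ne_self {m : ℕ} (p : Fin (2 * m)) : p.rev ≠ p := by
  rw [Ne, Fin.ext_iff, Fin.val_rev]
  omega

lemma exists_conj_diagonal_of_comp_swap_rev {m : ℕ} {d d' : Fin (2 * m) → ℂ} {c p : Fin (2 * m)}
    (hd : d ∘ swap c c.rev = d') (hp : d p.rev = d p) :
    ∃ g : Matrix (Fin (2 * m)) (Fin (2 * m)) ℂ,
      gᵀ * wMat (2 * m) * g = wMat (2 * m) ∧ g.det = 1 ∧ g * diagonal d * g⁻¹ = diagonal d' := by
  refine ⟨(swap p p.rev * swap c c.rev).permMatrix ℂ, ?_, ?_, ?_⟩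
  · rw [wMat_eq_permMatrix_revPerm]
    exact Perm.transpose_permMatrix_mul_permMatrix_mul
      ((commute_swap_revPerm p).mul_left (commute_swap_revPerm c))
  · rw [det_permutation, Perm.sign_mul, Perm.sign_swap (p.rev_ne_self).symm,
      Perm.sign_swap (c.rev_ne_self).symm]
    norm_num
  · rw [Perm.permMatrix_mul_diagonal_mul_inv, Perm.coe_mul, ← Function.comp_assoc,
      Function.comp_swap_of_eq hp.symm, hd]

lemma d1_of_val_eq_sub_one {n : ℕ} (hn : 2 ≤ n) (a b : ℤ) {j : Fin (2 * n)} (h : j.val = n - 1) :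
    d1 n a b j = Complex.I ^ b := by
  simp only [d1, h]
  split_ifs <;> first | rfl | omega

lemma d1_of_val_eq {n : ℕ} (hn : 1 ≤ n) (a b : ℤ) {j : Fin (2 * n)} (h : j.val = n) :
    d1 n a b j = (-Complex.I) ^ b := by
  simp only [d1, h]
  split_ifs <;> first | rfl | omega

lemma d1_comp_swap_rev {n : ℕ} (hn : 2 ≤ n) (a b : ℤ) :
    d1 n a b ∘ swap ⟨n - 1, by omega⟩ (Fin.rev ⟨n - 1, by omega⟩) = d2 n a b := by
  set c : Fin (2 * n) := ⟨n - 1, by omega⟩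
  have hc : c.rev.val = n := by simp only [c, Fin.val_rev]; omega
  funext j
  simp only [Function.comp_apply, d2]
  split_ifs with h1 h2
  · rw [show j = c from Fin.ext h1, swap_apply_left, d1_of_val_eq (by omega) a b hc]
  · rw [show j = c.rev from Fin.ext (h2.trans hc.symm), swap_apply_right,
      d1_of_val_eq_sub_one hn a b rfl]
  · rw [swap_apply_of_ne_of_ne (fun h => h1 (by rw [h])) (fun h => h2 (by rw [h, hc]))]

lemma exists_d1_rev_eq {n : ℕ} (hn : 3 ≤ n) (a b : ℤ) :
    ∃ p : Fin (2 * n), d1 n a b p.rev = d1 n a b p := by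
  rcases Int.even_or_odd b with hb | hb
  · refine ⟨⟨n - 1, by omega⟩, ?_⟩
    simp only [d1, Fin.val_rev]
    split_ifs <;> first | omega | contradiction | exact hb.neg_zpow _
  rcases Int.even_or_odd a with ha | ha
  · refine ⟨⟨0, by omega⟩, ?_⟩
    simp only [d1, Fin.val_rev]
    split_ifs <;> first | omega | contradiction | exact ha.neg_zpow _
  · have hab : Even (a + b) := ha.add_odd hb
    refine ⟨⟨1, by omega⟩, ?_⟩
    simp only [d1, Fin.val_rev]
    split_ifs <;> first | omega | contradiction | exact hab.neg_zpow _

/-- For every `n ≥ 3` and all integers `a, b`, the matrices `M₁(a,b)` and `M₂(a,b)` are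
conjugate in `SO_w(2n,ℂ)`. -/
theorem statement0 (n : ℕ) (hn : 3 ≤ n) (a b : ℤ) :
    ∃ g : Matrix (Fin (2 * n)) (Fin (2 * n)) ℂ,
      gᵀ * wMat (2 * n) * g = wMat (2 * n) ∧ g.det = 1 ∧
        g * M1 n a b * g⁻¹ = M2 n a b := by
  obtain ⟨p, hp⟩ := exists_d1_rev_eq hn a b
  exact exists_conj_diagonal_of_comp_swap_rev (d1_comp_swap_rev (by omega) a b) hp

end
end

section
/- Let n ≥ 3 and let t = diag(i·I_{n−1}, I₂, −i·I_{n−1}) ∈ GL_{2n}(ℂ) (diagonal with entry i in positions 1,…,n−1, entry 1 in positions n, n+1, and entry −i in positions n+2,…,2n). A matrix M ∈ SO_w(2n,ℂ) commutes with t if and only if M is the block-diagonal matrix diag(A, B, w_{n−1}·(Aᵀ)⁻¹·w_{n−1}) for some A ∈ GL_{n−1}(ℂ) and some B ∈ SO_w(2,ℂ). -/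
open Matrix

noncomputable section

/-- The `2n × 2n` block-diagonal matrix `diag(A, B, C)` with diagonal blocks
`A` of size `n−1`, `B` of size `2` and `C` of size `n−1`, and zeros elsewhere. -/
def blockDiag3 (n : ℕ) (A : Matrix (Fin (n - 1)) (Fin (n - 1)) ℂ)
    (B : Matrix (Fin 2) (Fin 2) ℂ) (C : Matrix (Fin (n - 1)) (Fin (n - 1)) ℂ) :
    Matrix (Fin (2 * n)) (Fin (2 * n)) ℂ :=
  Matrix.of fun j k =>
    if hj : (j : ℕ) < n - 1 then
      if hk : (k : ℕ) < n - 1 then A ⟨(j : ℕ), hj⟩ ⟨(k : ℕ), hk⟩ else 0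
    else if hj2 : (j : ℕ) < n + 1 then
      if hk2 : (k : ℕ) < n + 1 ∧ ¬ (k : ℕ) < n - 1 then
        B ⟨(j : ℕ) - (n - 1), by omega⟩ ⟨(k : ℕ) - (n - 1), by omega⟩
      else 0
    else
      if hk3 : n + 1 ≤ (k : ℕ) then
        C ⟨(j : ℕ) - (n + 1), by have := j.isLt; omega⟩
          ⟨(k : ℕ) - (n + 1), by have := k.isLt; omega⟩
      else 0

/-- The diagonal matrix `t = diag(i·I_{n−1}, I₂, −i·I_{n−1})` of size `2n`. -/
def tMat (n : ℕ) : Matrix (Fin (2 * n)) (Fin (2 * n)) ℂ :=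
  Matrix.diagonal fun j =>
    if (j : ℕ) < n - 1 then Complex.I
    else if (j : ℕ) < n + 1 then 1
    else -Complex.I

/-! Reordering the basis into blocks of sizes `n - 1`, `2`, `n - 1` turns `t` into a diagonal
matrix with the pairwise distinct eigenvalues `i`, `1`, `-i`, so its centralizer consists of the
block-diagonal matrices `diag(A, B, C)`, and turns `w_{2n}` into the block-antidiagonal matrix
with blocks `w_{n-1}`, `w_2`, `w_{n-1}`. For `M = diag(A, B, C)` the condition `Mᵀ w M = w` then
amounts to `Bᵀ w₂ B = w₂` and `Aᵀ w C = w`, i.e. `C = w (Aᵀ)⁻¹ w`; the latter gives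
`det A · det C = 1`, so `det M = 1` forces `det B = 1`. -/

lemma wMat_eq_submatrix_one (m : ℕ) :
    wMat m = (1 : Matrix (Fin m) (Fin m) ℂ).submatrix Fin.revPerm id := by
  ext j k
  simp only [wMat, of_apply, submatrix_apply, id, one_apply, Fin.ext_iff, Fin.revPerm_apply,
    Fin.val_rev]
  exact if_congr (by omega) rfl rfl

lemma wMat_mul_self (m : ℕ) : wMat m * wMat m = 1 := by
  rw [wMat_eq_submatrix_one, submatrix_id_mul_left, Fin.revPerm_symm, submatrix_one_equiv, mul_one]

def blockEquiv (n : ℕ) (hn : 1 ≤ n) : Fin (n - 1) ⊕ (Fin 2 ⊕ Fin (n - 1)) ≃ Fin (2 * n) :=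
  ((Equiv.sumCongr (Equiv.refl _) finSumFinEquiv).trans finSumFinEquiv).trans
    (finCongr (by omega))

section blockEquiv

variable {n : ℕ} (hn : 1 ≤ n)

@[simp]
lemma blockEquiv_inl (j : Fin (n - 1)) : (blockEquiv n hn (.inl j) : ℕ) = j := by
  simp [blockEquiv]

@[simp]
lemma blockEquiv_inr_inl (b : Fin 2) : (blockEquiv n hn (.inr (.inl b)) : ℕ) = n - 1 + b := by
  simp [blockEquiv]

@[simp]
lemma blockEquiv_inr_inr (k : Fin (n - 1)) :
    (blockEquiv n hn (.inr (.inr k)) : ℕ) = n + 1 + k := by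
  simp [blockEquiv]
  omega

lemma blockDiag3_submatrix_blockEquiv (A B C) :
    (blockDiag3 n A B C).submatrix (blockEquiv n hn) (blockEquiv n hn) =
      fromBlocks A 0 0 (fromBlocks B 0 0 C) := by
  ext (j | b | j) (k | c | k) <;>
    simp only [blockDiag3, submatrix_apply, of_apply, blockEquiv_inl, blockEquiv_inr_inl,
      blockEquiv_inr_inr, fromBlocks_apply₁₁, fromBlocks_apply₁₂, fromBlocks_apply₂₁,
      fromBlocks_apply₂₂, Matrix.zero_apply] <;>
    split_ifs <;> first | rfl | omega | congr 1 <;> ext <;> simp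

lemma wMat_submatrix_blockEquiv :
    (wMat (2 * n)).submatrix (blockEquiv n hn) (blockEquiv n hn) =
      fromBlocks 0 (fromCols 0 (wMat (n - 1))) (fromRows 0 (wMat (n - 1)))
        (fromBlocks (wMat 2) 0 0 0) := by
  ext (j | b | j) (k | c | k) <;>
    simp only [wMat, submatrix_apply, of_apply, blockEquiv_inl, blockEquiv_inr_inl,
      blockEquiv_inr_inr, fromBlocks_apply₁₁, fromBlocks_apply₁₂, fromBlocks_apply₂₁,
      fromBlocks_apply₂₂, fromCols_apply_inl, fromCols_apply_inr, fromRows_apply_inl,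
      fromRows_apply_inr, Matrix.zero_apply] <;>
    split_ifs <;> first | rfl | omega

lemma tMat_submatrix_blockEquiv :
    (tMat n).submatrix (blockEquiv n hn) (blockEquiv n hn) =
      diagonal (Sum.elim (fun _ => Complex.I) (Sum.elim (fun _ => 1) (fun _ => -Complex.I))) := by
  rw [tMat, submatrix_diagonal_equiv]
  congr 1
  ext (j | b | k) <;>
    simp only [Function.comp_apply, blockEquiv_inl, blockEquiv_inr_inl, blockEquiv_inr_inr,
      Sum.elim_inl, Sum.elim_inr] <;>
    split_ifs <;> first | rfl | omega

end blockEquiv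

lemma Matrix.apply_eq_zero_of_commute_diagonal {ι R : Type*} [Fintype ι] [DecidableEq ι]
    [CommRing R] [NoZeroDivisors R] {d : ι → R} {N : Matrix ι ι R}
    (h : Commute N (diagonal d)) {x y : ι} (hxy : d x ≠ d y) : N x y = 0 := by
  have hxy' := congr_fun₂ h.eq x y
  rw [mul_diagonal, diagonal_mul] at hxy'
  have : N x y * (d y - d x) = 0 := by linear_combination hxy'
  exact (mul_eq_zero.mp this).resolve_right (sub_ne_zero.mpr hxy.symm)

lemma Matrix.eq_fromBlocks_of_commute_diagonal {l m p R : Type*} [Fintype l] [Fintype m]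
    [Fintype p] [DecidableEq l] [DecidableEq m] [DecidableEq p] [CommRing R] [NoZeroDivisors R]
    {a b c : R} (hab : a ≠ b) (hac : a ≠ c) (hbc : b ≠ c) {N : Matrix (l ⊕ m ⊕ p) (l ⊕ m ⊕ p) R}
    (h : Commute N (diagonal (Sum.elim (fun _ => a) (Sum.elim (fun _ => b) fun _ => c)))) :
    N = fromBlocks N.toBlocks₁₁ 0 0
      (fromBlocks N.toBlocks₂₂.toBlocks₁₁ 0 0 N.toBlocks₂₂.toBlocks₂₂) := by
  ext (i | j | k) (i' | j' | k') <;>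
    simp only [fromBlocks_apply₁₁, fromBlocks_apply₁₂, fromBlocks_apply₂₁, fromBlocks_apply₂₂,
      toBlocks₁₁, toBlocks₂₂, of_apply, Matrix.zero_apply] <;>
    first
    | rfl
    | exact apply_eq_zero_of_commute_diagonal h
        (by simp [hab, hac, hbc, hab.symm, hac.symm, hbc.symm])

section transposeWMat

variable {m : ℕ} {A C : Matrix (Fin m) (Fin m) ℂ}

lemma transpose_mul_conj_wMat_eq_one (h : Aᵀ * wMat m * C = wMat m) :
    Aᵀ * (wMat m * C * wMat m) = 1 := by
  rw [← Matrix.mul_assoc, ← Matrix.mul_assoc, h, wMat_mul_self]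

lemma eq_wMat_mul_inv_transpose_mul_wMat (h : Aᵀ * wMat m * C = wMat m) :
    C = wMat m * (Aᵀ)⁻¹ * wMat m := by
  rw [inv_eq_right_inv (transpose_mul_conj_wMat_eq_one h)]
  simp only [← Matrix.mul_assoc, wMat_mul_self, Matrix.one_mul]
  rw [Matrix.mul_assoc, wMat_mul_self, Matrix.mul_one]

lemma det_mul_det_eq_one_of_transpose_mul_wMat_mul (h : Aᵀ * wMat m * C = wMat m) :
    A.det * C.det = 1 := by
  have hw : (wMat m).det * (wMat m).det = 1 := by rw [← det_mul, wMat_mul_self, det_one]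
  have hAC := congr_arg det (transpose_mul_conj_wMat_eq_one h)
  rw [det_mul, det_mul, det_mul, det_transpose, det_one] at hAC
  linear_combination hAC - A.det * C.det * hw

end transposeWMat

section blockDiag3

variable {n : ℕ} {A C : Matrix (Fin (n - 1)) (Fin (n - 1)) ℂ} {B : Matrix (Fin 2) (Fin 2) ℂ}

lemma blockDiag3_commute_tMat : Commute (blockDiag3 n A B C) (tMat n) := by
  ext j k
  rw [tMat, mul_diagonal, diagonal_mul]
  simp only [blockDiag3, of_apply]
  split_ifs <;> first | omega | ring

lemma exists_eq_blockDiag3_of_commute_tMat (hn : 1 ≤ n)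
    {M : Matrix (Fin (2 * n)) (Fin (2 * n)) ℂ} (hM : Commute M (tMat n)) :
    ∃ A B C, M = blockDiag3 n A B C := by
  set e := blockEquiv n hn
  have hMe : Commute (M.submatrix e e) ((tMat n).submatrix e e) :=
    hM.map (reindexRingEquiv ℂ e.symm)
  rw [tMat_submatrix_blockEquiv] at hMe
  set N := M.submatrix e e
  refine ⟨N.toBlocks₁₁, N.toBlocks₂₂.toBlocks₁₁, N.toBlocks₂₂.toBlocks₂₂,
    (reindex e.symm e.symm).injective ?_⟩
  rw [reindex_apply, reindex_apply, Equiv.symm_symm, blockDiag3_submatrix_blockEquiv]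
  exact eq_fromBlocks_of_commute_diagonal (by norm_num [Complex.ext_iff])
    (by norm_num [Complex.ext_iff]) (by norm_num [Complex.ext_iff]) hMe

lemma det_blockDiag3 (hn : 1 ≤ n) : (blockDiag3 n A B C).det = A.det * (B.det * C.det) := by
  rw [← det_submatrix_equiv_self (blockEquiv n hn), blockDiag3_submatrix_blockEquiv,
    det_fromBlocks_zero₂₁, det_fromBlocks_zero₂₁]

lemma transpose_mul_wMat_mul_of_blockDiag3 (hn : 1 ≤ n)
    (h : (blockDiag3 n A B C)ᵀ * wMat (2 * n) * blockDiag3 n A B C = wMat (2 * n)) :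
    Aᵀ * wMat (n - 1) * C = wMat (n - 1) ∧ Bᵀ * wMat 2 * B = wMat 2 := by
  have h' := congr_arg (reindex (blockEquiv n hn).symm (blockEquiv n hn).symm) h
  simp only [reindex_apply, Equiv.symm_symm, ← submatrix_mul_equiv _ _ _ (blockEquiv n hn),
    ← transpose_submatrix, blockDiag3_submatrix_blockEquiv, wMat_submatrix_blockEquiv] at h'
  simp only [fromBlocks_transpose, transpose_zero, fromBlocks_multiply, Matrix.mul_zero,
    Matrix.zero_mul, add_zero, zero_add, mul_fromCols, fromCols_mul_fromBlocks,
    fromBlocks_mul_fromRows, fromRows_mul, fromBlocks_inj, fromCols_ext_iff, fromRows_ext_iff,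
    true_and, and_true] at h'
  exact ⟨h'.1, h'.2.2⟩

end blockDiag3

/-- A matrix `M ∈ SO_w(2n,ℂ)` commutes with `t = diag(i·I_{n−1}, I₂, −i·I_{n−1})` if and
only if `M = diag(A, B, w_{n−1}·(Aᵀ)⁻¹·w_{n−1})` for some `A ∈ GL_{n−1}(ℂ)` and
`B ∈ SO_w(2,ℂ)`. -/
theorem statement5 (n : ℕ) (hn : 3 ≤ n) (M : Matrix (Fin (2 * n)) (Fin (2 * n)) ℂ)
    (hM1 : Mᵀ * wMat (2 * n) * M = wMat (2 * n)) (hM2 : M.det = 1) :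
    M * tMat n = tMat n * M ↔
      ∃ (A : Matrix (Fin (n - 1)) (Fin (n - 1)) ℂ) (B : Matrix (Fin 2) (Fin 2) ℂ),
        IsUnit A ∧ (Bᵀ * wMat 2 * B = wMat 2 ∧ B.det = 1) ∧
          M = blockDiag3 n A B (wMat (n - 1) * (Aᵀ)⁻¹ * wMat (n - 1)) := by
  have hn1 : 1 ≤ n := by omega
  refine ⟨fun hM => ?_, ?_⟩
  · obtain ⟨A, B, C, rfl⟩ := exists_eq_blockDiag3_of_commute_tMat hn1 hM
    obtain ⟨hAC, hB⟩ := transpose_mul_wMat_mul_of_blockDiag3 hn1 hM1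
    have hdetAC := det_mul_det_eq_one_of_transpose_mul_wMat_mul hAC
    rw [det_blockDiag3 hn1] at hM2
    refine ⟨A, B, (isUnit_iff_isUnit_det A).mpr (IsUnit.of_mul_eq_one _ hdetAC),
      ⟨hB, by linear_combination hM2 - B.det * hdetAC⟩, ?_⟩
    rw [← eq_wMat_mul_inv_transpose_mul_wMat hAC]
  · rintro ⟨A, B, -, -, rfl⟩
    exact blockDiag3_commute_tMat

end
end

section
/- Let n ≥ 3. There is no g ∈ SO_w(2n,ℂ) satisfying simultaneously g · M₁(1,0) · g⁻¹ = M₂(1,0) and g · M₁(0,1) · g⁻¹ = M₂(0,1). Consequently the group homomorphisms ℤ × ℤ → SO_w(2n,ℂ) given by (a,b) ↦ M₁(a,b) and (a,b) ↦ M₂(a,b) are pointwise conjugate in SO_w(2n,ℂ) but are not conjugate by any single element of SO_w(2n,ℂ). -/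
open Matrix

noncomputable section

/-- Membership in `SO_w(2n,ℂ)`. -/
def memSOw (n : ℕ) (g : Matrix (Fin (2 * n)) (Fin (2 * n)) ℂ) : Prop :=
  gᵀ * wMat (2 * n) * g = wMat (2 * n) ∧ g.det = 1

/-! ### Auxiliary lemmas -/

lemma rev_val_iff {m : ℕ} (x y : Fin m) :
    ((x : ℕ) + (y : ℕ) + 1 = m) ↔ y = Fin.rev x := by
  rw [Fin.ext_iff, Fin.val_rev]
  have := x.isLt; have := y.isLt
  omega

lemma wMat_eq_perm (m : ℕ) : wMat m = (Fin.revPerm : Equiv.Perm (Fin m)).permMatrix ℂ := by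
  ext j k
  simp only [wMat, Matrix.of_apply, Equiv.Perm.permMatrix, PEquiv.toMatrix_apply,
    Equiv.toPEquiv_apply, Option.mem_def, Option.some.injEq]
  exact if_congr ((rev_val_iff j k).trans (by exact eq_comm)) rfl rfl

lemma permMatrix_transpose {m : ℕ} (σ : Equiv.Perm (Fin m)) :
    (σ.permMatrix ℂ)ᵀ = (σ⁻¹).permMatrix ℂ := by
  rw [Equiv.Perm.permMatrix, Equiv.Perm.permMatrix, show σ⁻¹ = σ.symm from rfl,
    Equiv.toPEquiv_symm, PEquiv.toMatrix_symm]

lemma perm_preserves_w (n : ℕ) (σ : Equiv.Perm (Fin (2 * n)))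
    (hrev : ∀ j, σ (Fin.rev j) = Fin.rev (σ j)) :
    (σ.permMatrix ℂ)ᵀ * wMat (2 * n) * σ.permMatrix ℂ = wMat (2 * n) := by
  have hrev' : ∀ j, σ.symm (Fin.rev j) = Fin.rev (σ.symm j) := by
    intro j
    rw [Equiv.symm_apply_eq, hrev, Equiv.apply_symm_apply]
  rw [permMatrix_transpose, Equiv.Perm.permMatrix, Equiv.Perm.permMatrix,
    PEquiv.toMatrix_toPEquiv_mul, PEquiv.mul_toMatrix_toPEquiv, Matrix.submatrix_submatrix]
  ext j k
  simp only [Matrix.submatrix_apply, Function.comp, id_eq, wMat, Matrix.of_apply]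
  refine if_congr ?_ rfl rfl
  show ((σ⁻¹ j : ℕ) + (σ.symm k : ℕ) + 1 = 2 * n) ↔ _
  rw [show σ⁻¹ = σ.symm from rfl, rev_val_iff, ← hrev' j,
    EmbeddingLike.apply_eq_iff_eq, ← rev_val_iff]

lemma perm_conj {m : ℕ} (σ : Equiv.Perm (Fin m)) (f g : Fin m → ℂ)
    (hfg : ∀ j, f (σ j) = g j) :
    σ.permMatrix ℂ * Matrix.diagonal f = Matrix.diagonal g * σ.permMatrix ℂ := by
  rw [Equiv.Perm.permMatrix, PEquiv.toMatrix_toPEquiv_mul, PEquiv.mul_toMatrix_toPEquiv]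
  ext j k
  simp only [Matrix.submatrix_apply, id_eq]
  rcases eq_or_ne (σ j) k with rfl | hne
  · rw [Matrix.diagonal_apply_eq, Equiv.symm_apply_apply, Matrix.diagonal_apply_eq, hfg]
  · rw [Matrix.diagonal_apply_ne _ hne, Matrix.diagonal_apply_ne]
    exact fun h => hne (by rw [h, Equiv.apply_symm_apply])

lemma swap_rev_comm {m : ℕ} (x : Fin m) (j : Fin m) :
    Equiv.swap x (Fin.rev x) (Fin.rev j) = Fin.rev (Equiv.swap x (Fin.rev x) j) := by
  rcases eq_or_ne j x with rfl | hx
  · rw [Equiv.swap_apply_right, Equiv.swap_apply_left, Fin.rev_rev]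
  rcases eq_or_ne j (Fin.rev x) with rfl | hy
  · rw [Fin.rev_rev, Equiv.swap_apply_left, Equiv.swap_apply_right]
  · rw [Equiv.swap_apply_of_ne_of_ne hx hy, Equiv.swap_apply_of_ne_of_ne]
    · exact fun h => hy (by rw [← h, Fin.rev_rev])
    · exact Fin.rev_injective.ne hx


/-! ### Evaluating the diagonals -/

section dEval

variable {n : ℕ} (a b : ℤ)

lemma d1_at_zero (j : Fin (2 * n)) (hj : (j : ℕ) = 0) : d1 n a b j = Complex.I ^ a := by
  simp only [d1]; rw [if_pos hj]

lemma d1_at_low (hn : 3 ≤ n) (j : Fin (2 * n)) (h1 : 1 ≤ (j : ℕ)) (h2 : (j : ℕ) ≤ n - 2) :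
    d1 n a b j = Complex.I ^ (a + b) := by
  simp only [d1]; rw [if_neg (by omega), if_pos h2]

lemma d1_at_nm1 (hn : 3 ≤ n) (j : Fin (2 * n)) (hj : (j : ℕ) = n - 1) :
    d1 n a b j = Complex.I ^ b := by
  simp only [d1]; rw [if_neg (by omega), if_neg (by omega), if_pos hj]

lemma d1_at_n (hn : 3 ≤ n) (j : Fin (2 * n)) (hj : (j : ℕ) = n) :
    d1 n a b j = (-Complex.I) ^ b := by
  simp only [d1]; rw [if_neg (by omega), if_neg (by omega), if_neg (by omega), if_pos hj]

lemma d1_at_high (hn : 3 ≤ n) (j : Fin (2 * n)) (h1 : n + 1 ≤ (j : ℕ)) (h2 : (j : ℕ) ≤ 2 * n - 2) :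
    d1 n a b j = (-Complex.I) ^ (a + b) := by
  simp only [d1]
  rw [if_neg (by omega), if_neg (by omega), if_neg (by omega), if_neg (by omega), if_pos h2]

lemma d1_at_last (hn : 3 ≤ n) (j : Fin (2 * n)) (hj : (j : ℕ) = 2 * n - 1) :
    d1 n a b j = (-Complex.I) ^ a := by
  simp only [d1]
  rw [if_neg (by omega), if_neg (by omega), if_neg (by omega), if_neg (by omega),
    if_neg (by omega)]

lemma d2_at_nm1 (hn : 3 ≤ n) (j : Fin (2 * n)) (hj : (j : ℕ) = n - 1) :
    d2 n a b j = (-Complex.I) ^ b := by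
  simp only [d2]; rw [if_pos hj]

lemma d2_at_n (hn : 3 ≤ n) (j : Fin (2 * n)) (hj : (j : ℕ) = n) :
    d2 n a b j = Complex.I ^ b := by
  simp only [d2]; rw [if_neg (by omega), if_pos hj]

lemma d2_at_other (hn : 3 ≤ n) (j : Fin (2 * n)) (h1 : (j : ℕ) ≠ n - 1) (h2 : (j : ℕ) ≠ n) :
    d2 n a b j = d1 n a b j := by
  simp only [d2]; rw [if_neg h1, if_neg h2]

end dEval

/-! ### Pointwise conjugation facts -/

section facts

variable {n : ℕ}

lemma factC (hn : 3 ≤ n) (a b : ℤ) (hb : Even b) : M1 n a b = M2 n a b := by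
  have hfun : d1 n a b = d2 n a b := by
    funext j
    rcases eq_or_ne (j : ℕ) (n - 1) with h | h
    · rw [d1_at_nm1 a b hn j h, d2_at_nm1 a b hn j h, hb.neg_zpow]
    · rcases eq_or_ne (j : ℕ) n with h' | h'
      · rw [d1_at_n a b hn j h', d2_at_n a b hn j h', hb.neg_zpow]
      · rw [d2_at_other a b hn j h h']
  rw [M1, M2, hfun]

/-- The single middle swap turns `d1` into `d2` when read through `d2 ∘ σ = d1`. -/
lemma fact0 (hn : 3 ≤ n) (a b : ℤ) (p : Fin (2 * n)) (hp : (p : ℕ) = n - 1) (j : Fin (2 * n)) :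
    d2 n a b (Equiv.swap p (Fin.rev p) j) = d1 n a b j := by
  have hrp : ((Fin.rev p : Fin (2 * n)) : ℕ) = n := by rw [Fin.val_rev]; omega
  have hj := j.isLt
  rcases eq_or_ne (j : ℕ) (n - 1) with h2 | h2
  · have hjp : j = p := Fin.ext (by omega)
    rw [hjp, Equiv.swap_apply_left, d2_at_n a b hn _ hrp, d1_at_nm1 a b hn _ hp]
  rcases eq_or_ne (j : ℕ) n with h3 | h3
  · have hjq : j = Fin.rev p := Fin.ext (by omega)
    rw [hjq, Equiv.swap_apply_right, d2_at_nm1 a b hn _ hp, d1_at_n a b hn _ hrp]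
  · rw [Equiv.swap_apply_of_ne_of_ne (Fin.ne_of_val_ne (by omega)) (Fin.ne_of_val_ne (by omega)),
      d2_at_other a b hn _ h2 h3]

lemma factD (hn : 3 ≤ n) (a b : ℤ) (ha : Even a) (p z : Fin (2 * n))
    (hp : (p : ℕ) = n - 1) (hz : (z : ℕ) = 0) (j : Fin (2 * n)) :
    d1 n a b (Equiv.swap p (Fin.rev p) (Equiv.swap z (Fin.rev z) j)) = d2 n a b j := by
  have hrp : ((Fin.rev p : Fin (2 * n)) : ℕ) = n := by rw [Fin.val_rev]; omega
  have hrz : ((Fin.rev z : Fin (2 * n)) : ℕ) = 2 * n - 1 := by rw [Fin.val_rev]; omega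
  have hj := j.isLt
  rcases eq_or_ne (j : ℕ) 0 with h0 | h0
  · have hjz : j = z := Fin.ext (by omega)
    rw [hjz, Equiv.swap_apply_left,
      Equiv.swap_apply_of_ne_of_ne (Fin.ne_of_val_ne (by omega)) (Fin.ne_of_val_ne (by omega)),
      d1_at_last a b hn _ hrz, d2_at_other a b hn _ (by omega) (by omega), d1_at_zero a b _ hz]
    exact ha.neg_zpow _
  rcases eq_or_ne (j : ℕ) (2 * n - 1) with h1 | h1
  · have hjz : j = Fin.rev z := Fin.ext (by omega)
    rw [hjz, Equiv.swap_apply_right,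
      Equiv.swap_apply_of_ne_of_ne (Fin.ne_of_val_ne (by omega)) (Fin.ne_of_val_ne (by omega)),
      d1_at_zero a b _ hz, d2_at_other a b hn _ (by omega) (by omega), d1_at_last a b hn _ hrz]
    exact (ha.neg_zpow _).symm
  rcases eq_or_ne (j : ℕ) (n - 1) with h2 | h2
  · have hjp : j = p := Fin.ext (by omega)
    have hin : Equiv.swap z (Fin.rev z) p = p :=
      Equiv.swap_apply_of_ne_of_ne (Fin.ne_of_val_ne (by omega)) (Fin.ne_of_val_ne (by omega))
    rw [hjp, hin, Equiv.swap_apply_left, d1_at_n a b hn _ hrp, d2_at_nm1 a b hn _ hp]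
  rcases eq_or_ne (j : ℕ) n with h3 | h3
  · have hjq : j = Fin.rev p := Fin.ext (by omega)
    have hin : Equiv.swap z (Fin.rev z) (Fin.rev p) = Fin.rev p :=
      Equiv.swap_apply_of_ne_of_ne (Fin.ne_of_val_ne (by omega)) (Fin.ne_of_val_ne (by omega))
    rw [hjq, hin, Equiv.swap_apply_right, d1_at_nm1 a b hn _ hp, d2_at_n a b hn _ hrp]
  · have hin : Equiv.swap z (Fin.rev z) j = j :=
      Equiv.swap_apply_of_ne_of_ne (Fin.ne_of_val_ne (by omega)) (Fin.ne_of_val_ne (by omega))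
    rw [hin,
      Equiv.swap_apply_of_ne_of_ne (Fin.ne_of_val_ne (by omega)) (Fin.ne_of_val_ne (by omega)),
      d2_at_other a b hn _ h2 h3]

lemma factE (hn : 3 ≤ n) (a b : ℤ) (hab : Even (a + b)) (p z : Fin (2 * n))
    (hp : (p : ℕ) = n - 1) (hz : (z : ℕ) = 1) (j : Fin (2 * n)) :
    d1 n a b (Equiv.swap p (Fin.rev p) (Equiv.swap z (Fin.rev z) j)) = d2 n a b j := by
  have hrp : ((Fin.rev p : Fin (2 * n)) : ℕ) = n := by rw [Fin.val_rev]; omega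
  have hrz : ((Fin.rev z : Fin (2 * n)) : ℕ) = 2 * n - 2 := by rw [Fin.val_rev]; omega
  have hj := j.isLt
  rcases eq_or_ne (j : ℕ) 1 with h0 | h0
  · have hjz : j = z := Fin.ext (by omega)
    rw [hjz, Equiv.swap_apply_left,
      Equiv.swap_apply_of_ne_of_ne (Fin.ne_of_val_ne (by omega)) (Fin.ne_of_val_ne (by omega)),
      d1_at_high a b hn _ (by omega) (by omega), d2_at_other a b hn _ (by omega) (by omega),
      d1_at_low a b hn _ (by omega) (by omega)]
    exact hab.neg_zpow _
  rcases eq_or_ne (j : ℕ) (2 * n - 2) with h1 | h1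
  · have hjz : j = Fin.rev z := Fin.ext (by omega)
    rw [hjz, Equiv.swap_apply_right,
      Equiv.swap_apply_of_ne_of_ne (Fin.ne_of_val_ne (by omega)) (Fin.ne_of_val_ne (by omega)),
      d1_at_low a b hn _ (by omega) (by omega), d2_at_other a b hn _ (by omega) (by omega),
      d1_at_high a b hn _ (by omega) (by omega)]
    exact (hab.neg_zpow _).symm
  rcases eq_or_ne (j : ℕ) (n - 1) with h2 | h2
  · have hjp : j = p := Fin.ext (by omega)
    have hin : Equiv.swap z (Fin.rev z) p = p :=
      Equiv.swap_apply_of_ne_of_ne (Fin.ne_of_val_ne (by omega)) (Fin.ne_of_val_ne (by omega))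
    rw [hjp, hin, Equiv.swap_apply_left, d1_at_n a b hn _ hrp, d2_at_nm1 a b hn _ hp]
  rcases eq_or_ne (j : ℕ) n with h3 | h3
  · have hjq : j = Fin.rev p := Fin.ext (by omega)
    have hin : Equiv.swap z (Fin.rev z) (Fin.rev p) = Fin.rev p :=
      Equiv.swap_apply_of_ne_of_ne (Fin.ne_of_val_ne (by omega)) (Fin.ne_of_val_ne (by omega))
    rw [hjq, hin, Equiv.swap_apply_right, d1_at_nm1 a b hn _ hp, d2_at_n a b hn _ hrp]
  · have hin : Equiv.swap z (Fin.rev z) j = j :=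
      Equiv.swap_apply_of_ne_of_ne (Fin.ne_of_val_ne (by omega)) (Fin.ne_of_val_ne (by omega))
    rw [hin,
      Equiv.swap_apply_of_ne_of_ne (Fin.ne_of_val_ne (by omega)) (Fin.ne_of_val_ne (by omega)),
      d2_at_other a b hn _ h2 h3]

end facts

/-- Main applicator: a permutation matrix with the right properties witnesses conjugacy. -/
lemma conj_of_perm (n : ℕ) (σ : Equiv.Perm (Fin (2 * n))) (a b : ℤ)
    (hrev : ∀ j, σ (Fin.rev j) = Fin.rev (σ j)) (hsign : Equiv.Perm.sign σ = 1)
    (hd : ∀ j, d1 n a b (σ j) = d2 n a b j) :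
    memSOw n (σ.permMatrix ℂ) ∧ σ.permMatrix ℂ * M1 n a b * (σ.permMatrix ℂ)⁻¹ = M2 n a b := by
  have hdet : (σ.permMatrix ℂ).det = 1 := by
    rw [Matrix.det_permutation, hsign]; norm_num
  refine ⟨⟨perm_preserves_w n σ hrev, hdet⟩, ?_⟩
  have hc : σ.permMatrix ℂ * M1 n a b = M2 n a b * σ.permMatrix ℂ := by
    rw [M1, M2]; exact perm_conj σ _ _ hd
  rw [hc, Matrix.mul_assoc, Matrix.mul_nonsing_inv _ (by rw [hdet]; exact isUnit_one),
    Matrix.mul_one]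

lemma part2 (n : ℕ) (hn : 3 ≤ n) (a b : ℤ) :
    ∃ g : Matrix (Fin (2 * n)) (Fin (2 * n)) ℂ, memSOw n g ∧ g * M1 n a b * g⁻¹ = M2 n a b := by
  rcases Int.even_or_odd b with hb | hb
  · refine ⟨1, ⟨by simp, by simp⟩, ?_⟩
    rw [inv_one, mul_one, one_mul, factC hn a b hb]
  · have hpne : (⟨n - 1, by omega⟩ : Fin (2 * n)) ≠ Fin.rev ⟨n - 1, by omega⟩ :=
      Fin.ne_of_val_ne (by rw [Fin.val_rev]; omega)
    rcases Int.even_or_odd a with ha | ha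
    · have hzne : (⟨0, by omega⟩ : Fin (2 * n)) ≠ Fin.rev ⟨0, by omega⟩ :=
        Fin.ne_of_val_ne (by rw [Fin.val_rev]; omega)
      obtain ⟨h1, h2⟩ := conj_of_perm n
        (Equiv.swap (⟨n - 1, by omega⟩ : Fin (2 * n)) (Fin.rev ⟨n - 1, by omega⟩) *
          Equiv.swap (⟨0, by omega⟩ : Fin (2 * n)) (Fin.rev ⟨0, by omega⟩)) a b
        (fun j => by simp only [Equiv.Perm.mul_apply]; rw [swap_rev_comm, swap_rev_comm])
        (by rw [_root_.map_mul, Equiv.Perm.sign_swap hpne, Equiv.Perm.sign_swap hzne]; norm_num)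
        (fun j => factD hn a b ha _ _ rfl rfl j)
      exact ⟨_, h1, h2⟩
    · have hzne : (⟨1, by omega⟩ : Fin (2 * n)) ≠ Fin.rev ⟨1, by omega⟩ :=
        Fin.ne_of_val_ne (by rw [Fin.val_rev]; omega)
      obtain ⟨h1, h2⟩ := conj_of_perm n
        (Equiv.swap (⟨n - 1, by omega⟩ : Fin (2 * n)) (Fin.rev ⟨n - 1, by omega⟩) *
          Equiv.swap (⟨1, by omega⟩ : Fin (2 * n)) (Fin.rev ⟨1, by omega⟩)) a b
        (fun j => by simp only [Equiv.Perm.mul_apply]; rw [swap_rev_comm, swap_rev_comm])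
        (by rw [_root_.map_mul, Equiv.Perm.sign_swap hpne, Equiv.Perm.sign_swap hzne]; norm_num)
        (fun j => factE hn a b (ha.add_odd hb) _ _ rfl rfl j)
      exact ⟨_, h1, h2⟩

/-! ### Part 1: no simultaneous conjugator -/

section part1

variable {n : ℕ}

lemma val10 (hn : 3 ≤ n) (x : Fin (2 * n)) :
    d1 n 1 0 x = if (x : ℕ) < n - 1 then Complex.I else if (x : ℕ) ≤ n then 1 else -Complex.I := by
  have hx := x.isLt
  by_cases c1 : (x : ℕ) = 0
  · rw [d1_at_zero _ _ x c1, if_pos (by omega), zpow_one]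
  by_cases c2 : (x : ℕ) ≤ n - 2
  · rw [d1_at_low _ _ hn x (by omega) c2, if_pos (by omega)]; norm_num
  by_cases c3 : (x : ℕ) = n - 1
  · rw [d1_at_nm1 _ _ hn x c3, if_neg (by omega), if_pos (by omega), zpow_zero]
  by_cases c4 : (x : ℕ) = n
  · rw [d1_at_n _ _ hn x c4, if_neg (by omega), if_pos (by omega), zpow_zero]
  by_cases c5 : (x : ℕ) ≤ 2 * n - 2
  · rw [d1_at_high _ _ hn x (by omega) c5, if_neg (by omega), if_neg (by omega)]; norm_num
  · rw [d1_at_last _ _ hn x (by omega), if_neg (by omega), if_neg (by omega)]; norm_num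

lemma val01 (hn : 3 ≤ n) (x : Fin (2 * n)) :
    d1 n 0 1 x = if (x : ℕ) = 0 then 1 else if (x : ℕ) < n then Complex.I
      else if (x : ℕ) < 2 * n - 1 then -Complex.I else 1 := by
  have hx := x.isLt
  by_cases c1 : (x : ℕ) = 0
  · rw [d1_at_zero _ _ x c1, if_pos c1, zpow_zero]
  by_cases c2 : (x : ℕ) ≤ n - 2
  · rw [d1_at_low _ _ hn x (by omega) c2, if_neg c1, if_pos (by omega)]; norm_num
  by_cases c3 : (x : ℕ) = n - 1
  · rw [d1_at_nm1 _ _ hn x c3, if_neg c1, if_pos (by omega), zpow_one]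
  by_cases c4 : (x : ℕ) = n
  · rw [d1_at_n _ _ hn x c4, if_neg c1, if_neg (by omega), if_pos (by omega), zpow_one]
  by_cases c5 : (x : ℕ) ≤ 2 * n - 2
  · rw [d1_at_high _ _ hn x (by omega) c5, if_neg c1, if_neg (by omega), if_pos (by omega)]
    norm_num
  · rw [d1_at_last _ _ hn x (by omega), if_neg c1, if_neg (by omega), if_neg (by omega), zpow_zero]

lemma part1 (hn : 3 ≤ n) :
    ¬ ∃ g : Matrix (Fin (2 * n)) (Fin (2 * n)) ℂ, memSOw n g ∧
        g * M1 n 1 0 * g⁻¹ = M2 n 1 0 ∧ g * M1 n 0 1 * g⁻¹ = M2 n 0 1 := by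
  rintro ⟨g, ⟨hw, hdet⟩, hc1, hc2⟩
  have dI1 : Complex.I ≠ 1 := by
    intro habs
    have := congrArg Complex.im habs
    simp at this
  have dIm : Complex.I ≠ -Complex.I := by
    intro habs
    have := congrArg Complex.im habs
    norm_num at this
  have d1m : (1 : ℂ) ≠ -Complex.I := by
    intro habs
    have := congrArg Complex.im habs
    norm_num at this
  set p : Fin (2 * n) := ⟨n - 1, by omega⟩ with hpdef
  have hp : (p : ℕ) = n - 1 := rfl
  have hrp : ((Fin.rev p : Fin (2 * n)) : ℕ) = n := by rw [Fin.val_rev]; omega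
  set σ0 : Equiv.Perm (Fin (2 * n)) := Equiv.swap p (Fin.rev p) with hσ0
  set P : Matrix (Fin (2 * n)) (Fin (2 * n)) ℂ := σ0.permMatrix ℂ with hP
  have hgu : IsUnit g.det := hdet ▸ isUnit_one
  have hmul : ∀ a b : ℤ, g * M1 n a b * g⁻¹ = M2 n a b → g * M1 n a b = M2 n a b * g := by
    intro a b hc
    calc g * M1 n a b = g * M1 n a b * (g⁻¹ * g) := by
          rw [Matrix.nonsing_inv_mul _ hgu, mul_one]
      _ = g * M1 n a b * g⁻¹ * g := by rw [mul_assoc (g * M1 n a b)]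
      _ = M2 n a b * g := by rw [hc]
  have hPM : ∀ a b : ℤ, P * M2 n a b = M1 n a b * P := by
    intro a b
    rw [hP, M1, M2]
    exact perm_conj σ0 _ _ (fun j => fact0 hn a b p hp j)
  set h : Matrix (Fin (2 * n)) (Fin (2 * n)) ℂ := P * g with hh
  have hcm : ∀ a b : ℤ, (g * M1 n a b * g⁻¹ = M2 n a b) → h * M1 n a b = M1 n a b * h := by
    intro a b hc
    calc h * M1 n a b = P * (g * M1 n a b) := by rw [hh, mul_assoc]
      _ = P * (M2 n a b * g) := by rw [hmul a b hc]
      _ = P * M2 n a b * g := by rw [mul_assoc]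
      _ = M1 n a b * (P * g) := by rw [hPM, mul_assoc]
  have hcm1 := hcm 1 0 hc1
  have hcm2 := hcm 0 1 hc2
  have hrev0 : ∀ j, σ0 (Fin.rev j) = Fin.rev (σ0 j) := fun j => swap_rev_comm p j
  have hwP : Pᵀ * wMat (2 * n) * P = wMat (2 * n) := perm_preserves_w n σ0 hrev0
  have hwh : hᵀ * wMat (2 * n) * h = wMat (2 * n) := by
    rw [hh, Matrix.transpose_mul]
    have e1 : gᵀ * Pᵀ * wMat (2 * n) * (P * g) = gᵀ * (Pᵀ * wMat (2 * n) * P) * g := by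
      simp only [mul_assoc]
    rw [e1, hwP]; exact hw
  -- block structure of h
  have hblock : ∀ j k : Fin (2 * n),
      (((j : ℕ) < n ∧ ¬ (k : ℕ) < n) ∨ (¬ (j : ℕ) < n ∧ (k : ℕ) < n)) → h j k = 0 := by
    intro j k hjk
    have hj := j.isLt; have hk := k.isLt
    have e1 : h j k * d1 n 1 0 k = d1 n 1 0 j * h j k := by
      have := congrFun (congrFun hcm1 j) k
      simpa [M1, Matrix.mul_diagonal, Matrix.diagonal_mul] using this
    have e2 : h j k * d1 n 0 1 k = d1 n 0 1 j * h j k := by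
      have := congrFun (congrFun hcm2 j) k
      simpa [M1, Matrix.mul_diagonal, Matrix.diagonal_mul] using this
    by_contra hne0
    have f1 : d1 n 1 0 j = d1 n 1 0 k := by
      have estep : h j k * d1 n 1 0 k = h j k * d1 n 1 0 j := by rw [e1]; ring
      exact (mul_left_cancel₀ hne0 estep).symm
    have f2 : d1 n 0 1 j = d1 n 0 1 k := by
      have estep : h j k * d1 n 0 1 k = h j k * d1 n 0 1 j := by rw [e2]; ring
      exact (mul_left_cancel₀ hne0 estep).symm
    rw [val10 hn j, val10 hn k] at f1
    have hjk' : ((j : ℕ) = n - 1 ∧ (k : ℕ) = n) ∨ ((j : ℕ) = n ∧ (k : ℕ) = n - 1) := by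
      rcases hjk with ⟨hjn, hkn⟩ | ⟨hjn, hkn⟩
      · have hjv : ¬ (j : ℕ) < n - 1 := by
          intro hlt
          rw [if_pos hlt] at f1
          by_cases hk2 : (k : ℕ) = n
          · rw [if_neg (by omega), if_pos (by omega)] at f1; exact dI1 f1
          · rw [if_neg (by omega), if_neg (by omega)] at f1; exact dIm f1
        rw [if_neg hjv, if_pos (by omega)] at f1
        have hkv : (k : ℕ) = n := by
          by_contra hk2
          rw [if_neg (by omega), if_neg (by omega)] at f1
          exact d1m f1
        exact Or.inl ⟨by omega, hkv⟩
      · have hkv : ¬ (k : ℕ) < n - 1 := by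
          intro hlt
          rw [if_pos hlt] at f1
          by_cases hj2 : (j : ℕ) = n
          · rw [if_neg (by omega), if_pos (by omega)] at f1; exact dI1 f1.symm
          · rw [if_neg (by omega), if_neg (by omega)] at f1; exact dIm f1.symm
        rw [if_neg (by omega)] at f1
        have hjv : (j : ℕ) = n := by
          by_contra hj2
          rw [if_neg (by omega), if_neg hkv, if_pos (by omega)] at f1
          exact d1m f1.symm
        rw [if_pos (by omega), if_neg hkv, if_pos (by omega)] at f1
        exact Or.inr ⟨hjv, by omega⟩
    rw [val01 hn j, val01 hn k] at f2
    rcases hjk' with ⟨hj1, hk1⟩ | ⟨hj1, hk1⟩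
    · rw [if_neg (by omega), if_pos (by omega), if_neg (by omega), if_neg (by omega),
        if_pos (by omega)] at f2
      exact dIm f2
    · rw [if_neg (by omega), if_neg (by omega), if_pos (by omega), if_neg (by omega),
        if_pos (by omega)] at f2
      exact dIm f2.symm
  -- reindex to a block matrix
  set e : (Fin n ⊕ Fin n) ≃ Fin (2 * n) := finSumFinEquiv.trans (finCongr (two_mul n).symm)
    with hedef
  have he1 : ∀ i : Fin n, ((e (Sum.inl i)) : ℕ) = (i : ℕ) := by
    intro i; simp [hedef]
  have he2 : ∀ i : Fin n, ((e (Sum.inr i)) : ℕ) = n + (i : ℕ) := by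
    intro i; simp [hedef]; omega
  set Hm := h.submatrix e e with hHm
  have h12 : Hm.toBlocks₁₂ = 0 := by
    ext i j
    show h (e (Sum.inl i)) (e (Sum.inr j)) = 0
    refine hblock _ _ ?_
    rw [he1, he2]
    exact Or.inl ⟨i.isLt, by omega⟩
  have h21 : Hm.toBlocks₂₁ = 0 := by
    ext i j
    show h (e (Sum.inr i)) (e (Sum.inl j)) = 0
    refine hblock _ _ ?_
    rw [he1, he2]
    exact Or.inr ⟨by omega, j.isLt⟩
  have hHb : Hm = Matrix.fromBlocks Hm.toBlocks₁₁ 0 0 Hm.toBlocks₂₂ := by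
    conv_lhs => rw [← Matrix.fromBlocks_toBlocks Hm]
    rw [h12, h21]
  have hWm : (wMat (2 * n)).submatrix e e = Matrix.fromBlocks 0 (wMat n) (wMat n) 0 := by
    ext i j
    rcases i with i | i <;> rcases j with j | j <;>
      have hi := i.isLt <;> have hj := j.isLt <;>
      simp only [Matrix.submatrix_apply, wMat, Matrix.of_apply, Matrix.fromBlocks_apply₁₁,
        Matrix.fromBlocks_apply₁₂, Matrix.fromBlocks_apply₂₁, Matrix.fromBlocks_apply₂₂,
        Matrix.zero_apply, he1, he2]
    · rw [if_neg (by omega)]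
    · exact if_congr (by omega) rfl rfl
    · exact if_congr (by omega) rfl rfl
    · rw [if_neg (by omega)]
  have hsub : Hmᵀ * ((wMat (2 * n)).submatrix e e) * Hm = (wMat (2 * n)).submatrix e e := by
    rw [hHm, Matrix.transpose_submatrix, Matrix.submatrix_mul_equiv,
      Matrix.submatrix_mul_equiv, hwh]
  rw [hWm] at hsub
  rw [hHb] at hsub
  rw [Matrix.fromBlocks_transpose, Matrix.fromBlocks_multiply, Matrix.fromBlocks_multiply]
    at hsub
  simp only [Matrix.transpose_zero, Matrix.mul_zero, Matrix.zero_mul, add_zero, zero_add]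
    at hsub
  have hkey := congrArg Matrix.toBlocks₁₂ hsub
  simp only [Matrix.toBlocks_fromBlocks₁₂] at hkey
  have hdetw : (wMat n).det ≠ 0 := by
    rw [wMat_eq_perm, Matrix.det_permutation]
    rcases Int.units_eq_one_or (Equiv.Perm.sign (Fin.revPerm : Equiv.Perm (Fin n))) with hs | hs <;>
      rw [hs] <;> norm_num
  have hAD : (Hm.toBlocks₁₁).det * (Hm.toBlocks₂₂).det = 1 := by
    have hd := congrArg Matrix.det hkey
    rw [Matrix.det_mul, Matrix.det_mul, Matrix.det_transpose] at hd
    have h2 : (Hm.toBlocks₁₁.det * Hm.toBlocks₂₂.det) * (wMat n).det = 1 * (wMat n).det := by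
      rw [one_mul]; linear_combination hd
    exact mul_right_cancel₀ hdetw h2
  have hdeth : h.det = 1 := by
    calc h.det = Hm.det := (Matrix.det_submatrix_equiv_self e h).symm
      _ = (Hm.toBlocks₁₁).det * (Hm.toBlocks₂₂).det := by
          rw [hHb]
          exact Matrix.det_fromBlocks_zero₂₁ _ _ _
      _ = 1 := hAD
  have hpne : p ≠ Fin.rev p := Fin.ne_of_val_ne (by omega)
  have hdetP : P.det = -1 := by
    rw [hP, Matrix.det_permutation, hσ0, Equiv.Perm.sign_swap hpne]
    norm_num
  have hfinal : h.det = P.det * g.det := by rw [hh, Matrix.det_mul]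
  rw [hdeth, hdetP, hdet, mul_one] at hfinal
  norm_num at hfinal

end part1

/-- For `n ≥ 3`: no `g ∈ SO_w(2n,ℂ)` simultaneously conjugates `M₁(1,0)` to `M₂(1,0)` and
`M₁(0,1)` to `M₂(0,1)`.  Consequently the homomorphisms `ℤ × ℤ → SO_w(2n,ℂ)` given by
`(a,b) ↦ M₁(a,b)` and `(a,b) ↦ M₂(a,b)` are pointwise conjugate in `SO_w(2n,ℂ)` but are
not conjugate by any single element of `SO_w(2n,ℂ)`. -/
theorem statement6 (n : ℕ) (hn : 3 ≤ n) :
    (¬ ∃ g : Matrix (Fin (2 * n)) (Fin (2 * n)) ℂ, memSOw n g ∧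
        g * M1 n 1 0 * g⁻¹ = M2 n 1 0 ∧ g * M1 n 0 1 * g⁻¹ = M2 n 0 1) ∧
    (∀ a b : ℤ, ∃ g : Matrix (Fin (2 * n)) (Fin (2 * n)) ℂ, memSOw n g ∧
        g * M1 n a b * g⁻¹ = M2 n a b) ∧
    ¬ ∃ g : Matrix (Fin (2 * n)) (Fin (2 * n)) ℂ, memSOw n g ∧
        ∀ a b : ℤ, g * M1 n a b * g⁻¹ = M2 n a b := by
  refine ⟨part1 hn, part2 n hn, ?_⟩
  rintro ⟨g, hg, hall⟩
  exact part1 hn ⟨g, hg, hall 1 0, hall 0 1⟩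

end
end

section
/- Let g ∈ GL_n(ℂ) be an invertible diagonalizable matrix (similar to a diagonal matrix). Then there exists an integer d ≥ 1 such that for every integer k ≥ 1, an n×n complex matrix x commutes with g^{dk} if and only if x commutes with g^d; i.e. the centralizer of g^{dk} in M_n(ℂ) equals the centralizer of g^d for all k ≥ 1. -/
/-!
Write `g = P D P⁻¹` with `D = diag(v)`. Conjugating by `P`, a matrix `x` commutes with `g ^ m`
iff `P⁻¹ x P` is supported on the pairs `(i, j)` with `v i ^ m = v j ^ m`. Take `d` to be a
common multiple of the orders of those ratios `v i / v j` that are roots of unity: then for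
`k ≥ 1`, `v i ^ (d * k) = v j ^ (d * k)` iff `v i ^ d = v j ^ d`, so the supports, and hence the
centralizers, agree.
-/

open Matrix

theorem exists_pos_forall_pow_mul_eq_one_iff {ι M : Type*} [Finite ι] [Monoid M] (a : ι → M) :
    ∃ d, 0 < d ∧ ∀ k, 0 < k → ∀ i, a i ^ (d * k) = 1 ↔ a i ^ d = 1 := by
  classical
  have := Fintype.ofFinite ι
  set S := Finset.univ.filter fun i => IsOfFinOrder (a i)
  have hd : 0 < ∏ i ∈ S, orderOf (a i) :=
    Finset.prod_pos fun i hi => (Finset.mem_filter.mp hi).2.orderOf_pos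
  refine ⟨_, hd, fun k hk i => ⟨fun h => ?_, fun h => by rw [pow_mul, h, one_pow]⟩⟩
  have hfin : IsOfFinOrder (a i) := isOfFinOrder_iff_pow_eq_one.mpr ⟨_, Nat.mul_pos hd hk, h⟩
  exact orderOf_dvd_iff_pow_eq_one.mp
    (Finset.dvd_prod_of_mem _ (Finset.mem_filter.mpr ⟨Finset.mem_univ i, hfin⟩))

theorem exists_pos_forall_pow_mul_eq_pow_mul_iff {ι K : Type*} [Finite ι] [CommGroupWithZero K]
    (v : ι → K) :
    ∃ d, 0 < d ∧ ∀ k, 0 < k → ∀ i j, v i ^ (d * k) = v j ^ (d * k) ↔ v i ^ d = v j ^ d := by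
  obtain ⟨d, hd, h⟩ := exists_pos_forall_pow_mul_eq_one_iff fun p : ι × ι => v p.1 / v p.2
  refine ⟨d, hd, fun k hk i j => ?_⟩
  rcases eq_or_ne (v j) 0 with hj | hj
  · simp [hj, hd.ne', (Nat.mul_pos hd hk).ne']
  · simpa only [div_pow, div_eq_one_iff_eq (pow_ne_zero _ hj)] using h k hk (i, j)

theorem Units.commute_conj_iff {M : Type*} [Monoid M] (u : Mˣ) (x y : M) :
    Commute x (u * y * ↑u⁻¹) ↔ Commute (↑u⁻¹ * x * u) y := by
  rw [Commute, SemiconjBy, ← Units.mul_right_inj u⁻¹, ← Units.mul_left_inj u]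
  simp only [Commute, SemiconjBy, mul_assoc, Units.inv_mul_cancel_left, Units.inv_mul, mul_one]

namespace Matrix

variable {n R : Type*} [Fintype n] [DecidableEq n] [CommRing R] [NoZeroDivisors R]

theorem commute_diagonal_iff (x : Matrix n n R) (w : n → R) :
    Commute x (diagonal w) ↔ ∀ i j, x i j ≠ 0 → w i = w j := by
  simp only [Commute, SemiconjBy, ← Matrix.ext_iff, mul_diagonal, diagonal_mul, mul_comm (x _ _),
    mul_eq_mul_right_iff]
  exact forall₂_congr fun i j => by rw [eq_comm, or_iff_not_imp_right]

theorem commute_diagonal_iff_of_eq_iff {w w' : n → R} (h : ∀ i j, w i = w j ↔ w' i = w' j)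
    (x : Matrix n n R) : Commute x (diagonal w) ↔ Commute x (diagonal w') := by
  simp only [commute_diagonal_iff, h]

end Matrix

theorem statement16_general (n : ℕ) (g : Matrix (Fin n) (Fin n) ℂ)
    (hdiag : ∃ (P D : Matrix (Fin n) (Fin n) ℂ), IsUnit P ∧ D.IsDiag ∧ g = P * D * P⁻¹) :
    ∃ d : ℕ, 1 ≤ d ∧ ∀ k : ℕ, 1 ≤ k →
      ∀ x : Matrix (Fin n) (Fin n) ℂ,
        x * g ^ (d * k) = g ^ (d * k) * x ↔ x * g ^ d = g ^ d * x := by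
  obtain ⟨P, D, ⟨U, rfl⟩, hD, rfl⟩ := hdiag
  obtain ⟨d, hd, hpow⟩ := exists_pos_forall_pow_mul_eq_pow_mul_iff D.diag
  refine ⟨d, hd, fun k hk x => ?_⟩
  change Commute _ _ ↔ Commute _ _
  rw [← coe_units_inv, Units.conj_pow, Units.conj_pow, ← hD.diagonal_diag, diagonal_pow,
    diagonal_pow, Units.commute_conj_iff, Units.commute_conj_iff]
  exact commute_diagonal_iff_of_eq_iff (hpow k hk) _

/-- If `g ∈ GL_n(ℂ)` is an invertible diagonalizable matrix, then there is `d ≥ 1` such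
that for all `k ≥ 1` the centralizer of `g^{dk}` in `M_n(ℂ)` equals that of `g^d`. -/
theorem statement16 (n : ℕ) (g : Matrix (Fin n) (Fin n) ℂ) (hg : IsUnit g)
    (hdiag : ∃ (P D : Matrix (Fin n) (Fin n) ℂ), IsUnit P ∧ D.IsDiag ∧ g = P * D * P⁻¹) :
    ∃ d : ℕ, 1 ≤ d ∧ ∀ k : ℕ, 1 ≤ k →
      ∀ x : Matrix (Fin n) (Fin n) ℂ,
        x * g ^ (d * k) = g ^ (d * k) * x ↔ x * g ^ d = g ^ d * x :=
  statement16_general n g hdiag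
end
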